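/- Let d > 0 be squarefree with -d ≡ 1 (mod 4), let K = Q(√-d) have odd class number h, and let p ≡ 1 (mod 4) be a prime that splits as p·p̄ in K. Let π = a + b√-d (with 2a, 2b ∈ Z) generate p^h. Then the quadratic residue symbol of π modulo p̄ equals the quartic residue symbol ((-d)/p)₄, i.e. π^((p-1)/2) ≡ (-d)^((p-1)/4) (mod p̄). -/

import Mathlib

/-!
Write `2π = U + V√-d` with `U, V ∈ ℤ`. Then `π̄ = U - π` satisfies `π π̄ = N(π) = p^h`, and
`π ∉ P̄` (otherwise `P ⊆ P̄`), so `π̄ ∈ P̄` and `π ≡ U (mod P̄)`; moreover `U² + dV² = 4p^h`.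
Modulo `p` this gives `U^((p-1)/2) ≡ (-d)^((p-1)/4) V^((p-1)/2)`, so everything comes down to
`(V/p) = 1`. As `h` is odd, `(V/p) = (V/p^h)`. For the odd part `w` of `|V|`, reciprocity gives
`(w/p^h) = (p^h/w) = (4p^h/w) = (U²/w) = 1`; for the power of `2`, the equation read modulo `32`
shows that `2` enters to an even power unless `p^h ≡ 1 (mod 8)`.
-/

open NumberField NumberTheorySymbols

theorem Int.sq_emod_thirty_two_mem (u : ℤ) :
    u ^ 2 % 32 ∈ ({0, 1, 4, 9, 16, 17, 25} : Finset ℤ) := by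
  rw [sq, Int.mul_emod]
  have h0 := Int.emod_nonneg u (by norm_num : (32 : ℤ) ≠ 0)
  have h1 := Int.emod_lt_of_pos u (by norm_num : (0 : ℤ) < 32)
  interval_cases u % 32 <;> decide

theorem emod_eight_eq_one_of_sq_add_mul_sq {n d k m : ℕ} {u : ℤ} (hn : n % 4 = 1)
    (hd : d % 4 = 3) (hk : Odd k) (hm : Odd m) (h : u ^ 2 + d * (2 ^ k * m : ℤ) ^ 2 = 4 * n) :
    n % 8 = 1 := by
  have hu := Int.sq_emod_thirty_two_mem u
  simp only [Finset.mem_insert, Finset.mem_singleton] at hu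
  obtain rfl | hk3 : k = 1 ∨ 3 ≤ k := by obtain ⟨j, rfl⟩ := hk; omega
  · -- `u² ≡ 8 (mod 16)`, which is impossible
    have hm2 : (m : ℤ) ^ 2 % 4 = 1 := Int.sq_mod_four_eq_one_of_odd (by exact_mod_cast hm)
    have hdm : (d * (m : ℤ) ^ 2) % 4 = 3 := by rw [Int.mul_emod, hm2]; omega
    have h' : u ^ 2 + 4 * (d * (m : ℤ) ^ 2) = 4 * n := by linear_combination h
    omega
  · -- `u² ≡ 4n (mod 32)`, which is impossible for `n ≡ 5 (mod 8)`
    have h8 : (8 : ℤ) ∣ 2 ^ k * m := Dvd.dvd.mul_right (by exact_mod_cast pow_dvd_pow 2 hk3) _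
    obtain ⟨j, hj⟩ := pow_dvd_pow_of_dvd h8 2
    have h' : u ^ 2 + 64 * (d * j) = 4 * n := by linear_combination h - d * hj
    omega

theorem jacobiSym_eq_one_of_dvd_four_mul_sub_sq {n m : ℕ} {u : ℤ} (hn : n % 4 = 1)
    (hm : Odd m) (hcop : n.Coprime m) (hdvd : (m : ℤ) ∣ 4 * n - u ^ 2) : J(m | n) = 1 := by
  rw [← jacobiSym.quadratic_reciprocity_one_mod_four hn hm]
  have h4 : J(4 | m) = 1 := by
    simpa using jacobiSym.sq_one' (a := 2) (Nat.coprime_two_left.2 hm)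
  have hsq : J(n | m) = J(u | m) ^ 2 := calc
    J(n | m) = J(4 * n | m) := by rw [jacobiSym.mul_left, h4, one_mul]
    _ = J(u ^ 2 | m) := jacobiSym.mod_left' (Int.modEq_iff_dvd.2 hdvd).symm
    _ = J(u | m) ^ 2 := jacobiSym.pow_left _ _ _
  have hne : J(n | m) ≠ 0 := jacobiSym.ne_zero (by simpa [Int.gcd_natCast_natCast] using hcop)
  rcases jacobiSym.trichotomy u m with h | h | h <;> simp_all

theorem jacobiSym_eq_one_of_sq_add_mul_sq {n d w : ℕ} {u : ℤ} (hn : n % 4 = 1)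
    (hd : d % 4 = 3) (h : u ^ 2 + d * (w : ℤ) ^ 2 = 4 * n) (hcop : w.Coprime n) :
    J(w | n) = 1 := by
  have hn_odd : Odd n := Nat.odd_iff.2 (by omega)
  rcases eq_or_ne w 0 with rfl | hw0
  · obtain rfl : n = 1 := by simpa using hcop
    exact jacobiSym.one_right _
  obtain ⟨k, m, hm, rfl⟩ := Nat.exists_eq_two_pow_mul_odd hw0
  push_cast at h ⊢
  have h2 : J(2 | n) ^ k = 1 := by
    rcases Nat.even_or_odd k with ⟨j, rfl⟩ | hk
    · rw [← two_mul, pow_mul, jacobiSym.sq_one (a := 2) (Nat.coprime_two_left.2 hn_odd),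
        one_pow]
    · rw [jacobiSym.at_two hn_odd, ZMod.χ₈_nat_eq_if_mod_eight, if_neg (by omega),
        if_pos (Or.inl (emod_eight_eq_one_of_sq_add_mul_sq hn hd hk hm h)), one_pow]
  have hm1 : J(m | n) = 1 := by
    refine jacobiSym_eq_one_of_dvd_four_mul_sub_sq (u := u) hn hm
      (Nat.Coprime.coprime_dvd_right (dvd_mul_left m _) hcop.symm) ⟨d * 2 ^ (2 * k) * m, ?_⟩
    linear_combination -h
  rw [jacobiSym.mul_left, jacobiSym.pow_left, h2, hm1, one_mul]

theorem jacobiSym_natAbs_left {n : ℕ} (hn : n % 4 = 1) (v : ℤ) :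
    J(v.natAbs | n) = J(v | n) := by
  rcases Int.natAbs_eq v with hv | hv
  · conv_rhs => rw [hv]
  · conv_rhs => rw [hv, neg_eq_neg_one_mul, jacobiSym.mul_left,
      jacobiSym.at_neg_one (Nat.odd_iff.2 (by omega)), ZMod.χ₄_nat_one_mod_four hn, one_mul]

theorem jacobiSym_eq_one_of_sq_add_mul_sq_eq_four_mul_pow {p d h : ℕ} {u v : ℤ}
    (hp : p.Prime) (hp4 : p % 4 = 1) (hd : d % 4 = 3) (hh : Odd h)
    (huv : u ^ 2 + d * v ^ 2 = 4 * p ^ h) (hpv : ¬ (p : ℤ) ∣ v) : J(v | p) = 1 := by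
  have hn : p ^ h % 4 = 1 := by simp [Nat.pow_mod, hp4]
  have hcop : v.natAbs.Coprime (p ^ h) :=
    ((hp.coprime_iff_not_dvd.2 (Int.natCast_dvd.not.1 hpv)).pow_left h).symm
  have hJ : J(v | p) ^ h = 1 := by
    rw [← jacobiSym.pow_right, ← jacobiSym_natAbs_left hn]
    exact jacobiSym_eq_one_of_sq_add_mul_sq (u := u) hn hd (by push_cast; rwa [sq_abs]) hcop
  rcases jacobiSym.trichotomy v p with h0 | h0 | h0
  · rw [h0, zero_pow hh.pos.ne'] at hJ; exact absurd hJ zero_ne_one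
  · exact h0
  · rw [h0, hh.neg_one_pow] at hJ; exact absurd hJ (by decide)

theorem dvd_pow_sub_pow_of_jacobiSym_eq_one {p : ℕ} (hp : p.Prime) (hp4 : p % 4 = 1)
    {a u v : ℤ} (huv : (p : ℤ) ∣ u ^ 2 - a * v ^ 2) (hv : J(v | p) = 1) :
    (p : ℤ) ∣ u ^ ((p - 1) / 2) - a ^ ((p - 1) / 4) := by
  have := Fact.mk hp
  have hv' : (v : ZMod p) ^ ((p - 1) / 2) = 1 := by
    rw [show (p - 1) / 2 = p / 2 by omega, ← legendreSym.eq_pow,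
      jacobiSym.legendreSym.to_jacobiSym, hv, Int.cast_one]
  have hu : (u : ZMod p) ^ 2 = a * v ^ 2 := by
    rw [← sub_eq_zero]; exact_mod_cast (ZMod.intCast_zmod_eq_zero_iff_dvd _ p).2 huv
  have hp2 : (p - 1) / 2 = 2 * ((p - 1) / 4) := by omega
  rw [← ZMod.intCast_zmod_eq_zero_iff_dvd, Int.cast_sub, sub_eq_zero, Int.cast_pow, Int.cast_pow,
    hp2, pow_mul, hu, mul_pow, ← pow_mul, ← hp2, hv', mul_one]

section SqrtBasis

variable {K : Type*} [Field K] [Algebra ℚ K] {a : ℚ} {s : K}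

theorem linearIndependent_one_sqrt (hs : s ^ 2 = algebraMap ℚ K a) (ha : ¬ IsSquare a) :
    LinearIndependent ℚ ![1, s] := by
  rw [linearIndependent_fin2]
  refine ⟨fun hs0 => ha ⟨0, ?_⟩, fun r hr => ha ⟨r⁻¹, ?_⟩⟩
  · simp only [Matrix.cons_val_one, Matrix.cons_val_fin_one] at hs0
    rw [hs0, zero_pow two_ne_zero, eq_comm, map_eq_zero] at hs
    rw [hs, mul_zero]
  · simp only [Matrix.cons_val_one, Matrix.cons_val_fin_one, Matrix.cons_val_zero,
      Algebra.smul_def] at hr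
    have hsr : s = algebraMap ℚ K r⁻¹ := by
      rw [map_inv₀]; exact eq_inv_of_mul_eq_one_right hr
    apply (algebraMap ℚ K).injective
    rw [← hs, hsr, map_mul, sq]

noncomputable def basisOneSqrt (hK : Module.finrank ℚ K = 2) (hs : s ^ 2 = algebraMap ℚ K a)
    (ha : ¬ IsSquare a) : Module.Basis (Fin 2) ℚ K :=
  basisOfLinearIndependentOfCardEqFinrank (linearIndependent_one_sqrt hs ha) (by simp [hK])

section

variable (hK : Module.finrank ℚ K = 2) (hs : s ^ 2 = algebraMap ℚ K a) (ha : ¬ IsSquare a)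

theorem coe_basisOneSqrt : ⇑(basisOneSqrt hK hs ha) = ![1, s] :=
  coe_basisOfLinearIndependentOfCardEqFinrank _ _

theorem basisOneSqrt_repr (x y : ℚ) :
    ⇑((basisOneSqrt hK hs ha).repr (algebraMap ℚ K x + algebraMap ℚ K y * s)) = ![x, y] := by
  have : algebraMap ℚ K x + algebraMap ℚ K y * s =
      (basisOneSqrt hK hs ha).equivFun.symm ![x, y] := by
    simp [Module.Basis.equivFun_symm_apply, coe_basisOneSqrt, Algebra.smul_def]
  rw [this, ← Module.Basis.equivFun_apply, LinearEquiv.apply_symm_apply]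

theorem leftMulMatrix_basisOneSqrt (x y : ℚ) :
    Algebra.leftMulMatrix (basisOneSqrt hK hs ha) (algebraMap ℚ K x + algebraMap ℚ K y * s) =
      !![x, a * y; y, x] := by
  have hmul : (algebraMap ℚ K x + algebraMap ℚ K y * s) * s =
      algebraMap ℚ K (a * y) + algebraMap ℚ K x * s := by
    rw [map_mul, ← hs]; ring
  ext i j
  rw [Algebra.leftMulMatrix_eq_repr_mul]
  fin_cases j
  · simp only [coe_basisOneSqrt, Fin.zero_eta, Matrix.cons_val_zero, mul_one, basisOneSqrt_repr]
    fin_cases i <;> rfl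
  · simp only [coe_basisOneSqrt, Fin.mk_one, Matrix.cons_val_one, Matrix.cons_val_fin_one, hmul,
      basisOneSqrt_repr]
    fin_cases i <;> rfl

end

theorem exists_eq_add_mul_sqrt (hK : Module.finrank ℚ K = 2) (hs : s ^ 2 = algebraMap ℚ K a)
    (ha : ¬ IsSquare a) (z : K) : ∃ x y : ℚ, z = algebraMap ℚ K x + algebraMap ℚ K y * s := by
  have := (basisOneSqrt hK hs ha).sum_repr z
  rw [Fin.sum_univ_two, coe_basisOneSqrt] at this
  exact ⟨_, _, by simpa [Algebra.smul_def, eq_comm] using this⟩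

theorem trace_add_mul_sqrt (hK : Module.finrank ℚ K = 2) (hs : s ^ 2 = algebraMap ℚ K a)
    (ha : ¬ IsSquare a) (x y : ℚ) :
    Algebra.trace ℚ K (algebraMap ℚ K x + algebraMap ℚ K y * s) = 2 * x := by
  rw [Algebra.trace_eq_matrix_trace (basisOneSqrt hK hs ha), leftMulMatrix_basisOneSqrt,
    Matrix.trace_fin_two_of, two_mul]

theorem norm_add_mul_sqrt (hK : Module.finrank ℚ K = 2) (hs : s ^ 2 = algebraMap ℚ K a)
    (ha : ¬ IsSquare a) (x y : ℚ) :
    Algebra.norm ℚ (algebraMap ℚ K x + algebraMap ℚ K y * s) = x ^ 2 - a * y ^ 2 := by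
  rw [Algebra.norm_eq_matrix_det (basisOneSqrt hK hs ha), leftMulMatrix_basisOneSqrt,
    Matrix.det_fin_two_of]
  ring

end SqrtBasis

theorem Rat.den_eq_one_of_squarefree_mul_sq {d : ℕ} (hd : Squarefree d) {q : ℚ} {c : ℤ}
    (h : d * q ^ 2 = c) : q.den = 1 := by
  have hZ : (d : ℤ) * q.num ^ 2 = q.den ^ 2 * c := by
    rw [← Rat.num_div_den q] at h
    field_simp at h
    exact_mod_cast h
  have hcop : IsCoprime ((q.den : ℤ) ^ 2) (q.num ^ 2) :=
    (Int.isCoprime_iff_gcd_eq_one.2 (by simpa [Int.gcd, Nat.coprime_comm] using q.reduced)).pow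
  have hden : ((q.den * q.den : ℕ) : ℤ) ∣ d := by
    push_cast; rw [← sq]; exact hcop.dvd_of_dvd_mul_right ⟨c, hZ⟩
  exact Nat.isUnit_iff.1 (hd _ (Int.natCast_dvd_natCast.1 hden))

theorem exists_two_mul_eq_add_mul_sqrt_neg {K : Type*} [Field K] [NumberField K]
    (hK : Module.finrank ℚ K = 2) {d : ℕ} (hd : Squarefree d) {s : 𝓞 K}
    (hs : s ^ 2 = -(d : 𝓞 K)) (z : 𝓞 K) :
    ∃ U V : ℤ, 2 * z = U + V * s ∧ U ^ 2 + d * V ^ 2 = 4 * Algebra.norm ℤ z := by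
  have hsK : (s : K) ^ 2 = algebraMap ℚ K (-d) := by
    simpa using congrArg (algebraMap (𝓞 K) K) hs
  have ha : ¬ IsSquare (-(d : ℚ)) := fun ⟨r, hr⟩ => by
    have : (0 : ℚ) < d := by exact_mod_cast Nat.pos_of_ne_zero hd.ne_zero
    nlinarith [mul_self_nonneg r]
  obtain ⟨x, y, hz⟩ := exists_eq_add_mul_sqrt hK hsK ha z
  have htr : (Algebra.trace ℤ (𝓞 K) z : ℚ) = 2 * x := by
    rw [Algebra.coe_trace_int, hz, trace_add_mul_sqrt hK hsK ha]
  have hnorm : (Algebra.norm ℤ z : ℚ) = x ^ 2 + d * y ^ 2 := by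
    rw [Algebra.coe_norm_int, hz, norm_add_mul_sqrt hK hsK ha]; ring
  have hy := Rat.coe_int_num_of_den_eq_one (Rat.den_eq_one_of_squarefree_mul_sq hd
    (c := 4 * Algebra.norm ℤ z - Algebra.trace ℤ (𝓞 K) z ^ 2) (q := 2 * y)
    (by push_cast; rw [htr, hnorm]; ring))
  refine ⟨Algebra.trace ℤ (𝓞 K) z, (2 * y).num, RingOfIntegers.coe_injective ?_, ?_⟩
  · have hcast : ∀ q : ℤ, ((q : 𝓞 K) : K) = algebraMap ℚ K q := fun q => by simp
    simp only [map_mul, map_add, map_ofNat, hcast, htr, hy]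
    linear_combination 2 * hz
  · exact_mod_cast (show ((Algebra.trace ℤ (𝓞 K) z : ℤ) : ℚ) ^ 2 + d * ((2 * y).num : ℚ) ^ 2 =
      4 * (Algebra.norm ℤ z : ℚ) by rw [htr, hy, hnorm]; ring)

theorem sub_mul_self_eq_of_two_mul_eq_add_mul {R : Type*} [CommRing R] [IsDomain R]
    [CharZero R] {s z : R} {d U V N : ℤ} (hs : s ^ 2 = -d) (hz : 2 * z = U + V * s)
    (hUV : U ^ 2 + d * V ^ 2 = 4 * N) : (U - z) * z = N := by
  refine mul_left_cancel₀ (by norm_num : (4 : R) ≠ 0) ?_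
  have hUV' := congrArg (Int.cast : ℤ → R) hUV
  push_cast at hUV'
  linear_combination (↑U - 2 * z - ↑V * s) * hz - ↑V ^ 2 * hs + hUV'

theorem Ideal.pow_sub_pow_mem_of_sub_intCast_mem {R : Type*} [CommRing R] {I : Ideal R}
    {p : ℕ} {x : R} {u a : ℤ} {k j : ℕ} (hp : (p : R) ∈ I) (hx : x - u ∈ I)
    (hdvd : (p : ℤ) ∣ u ^ k - a ^ j) : x ^ k - (a : R) ^ j ∈ I := by
  obtain ⟨c, hc⟩ := hdvd
  have hu : (u : R) ^ k - (a : R) ^ j ∈ I := by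
    have hc' := congrArg (Int.cast : ℤ → R) hc
    push_cast at hc'
    exact hc' ▸ I.mul_mem_right _ hp
  convert I.add_mem (I.mem_of_dvd (sub_dvd_pow_sub_pow x (u : R) k) hx) hu using 1
  ring

theorem Ideal.notMem_of_span_singleton_eq_pow {R : Type*} [CommRing R] [Ring.DimensionLEOne R]
    {P Q : Ideal R} (hP : P.IsPrime) (hP0 : P ≠ ⊥) (hQ : Q.IsPrime) (hPQ : P ≠ Q) {x : R}
    {h : ℕ} (hx : Ideal.span {x} = P ^ h) : x ∉ Q := fun hxQ =>
  hPQ <| (hP.isMaximal hP0).eq_of_le hQ.ne_top <|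
    hQ.le_of_pow_le (hx ▸ (Ideal.span_singleton_le_iff_mem _).2 hxQ)

theorem Ideal.absNorm_eq_of_span_natCast_eq_mul {K : Type*} [Field K] [NumberField K]
    (hK : Module.finrank ℚ K = 2) {p : ℕ} (hp : p.Prime) {P Q : Ideal (𝓞 K)} (hP : P ≠ ⊤)
    (hQ : Q ≠ ⊤) (h : Ideal.span {(p : 𝓞 K)} = P * Q) : Ideal.absNorm P = p := by
  have hPQ : Ideal.absNorm P * Ideal.absNorm Q = p ^ 2 := by
    rw [← map_mul, ← h, Ideal.absNorm_span_singleton, ← map_natCast (algebraMap ℤ (𝓞 K)),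
      Algebra.norm_algebraMap, RingOfIntegers.rank, hK]
    simp
  exact ((hp.mul_eq_prime_sq_iff (mt Ideal.absNorm_eq_one_iff.1 hP)
    (mt Ideal.absNorm_eq_one_iff.1 hQ)).1 hPQ).1

theorem quadratic_symbol_eq_quartic_symbol_general
    (d : ℕ) (hd : Squarefree d) (hd4 : d % 4 = 3)
    (K : Type) [Field K] [NumberField K]
    (hdeg : Module.finrank ℚ K = 2)
    (s : 𝓞 K) (hs : s ^ 2 = -(d : 𝓞 K))
    (hodd : Odd (classNumber K))
    (p : ℕ) (hp : p.Prime) (hp4 : p % 4 = 1)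
    (P Pb : Ideal (𝓞 K)) (hP : P.IsPrime) (hPb : Pb.IsPrime) (hPPb : P ≠ Pb)
    (hsplit : Ideal.span {(p : 𝓞 K)} = P * Pb)
    (π : 𝓞 K) (hgen : Ideal.span {π} = P ^ classNumber K) :
    π ^ ((p - 1) / 2) - (-(d : 𝓞 K)) ^ ((p - 1) / 4) ∈ Pb := by
  generalize classNumber K = h at hodd hgen
  have hpPb : (p : 𝓞 K) ∈ Pb :=
    (Ideal.mul_le_right : P * Pb ≤ Pb) (hsplit ▸ Ideal.mem_span_singleton_self _)
  have hP0 : P ≠ ⊥ := by rintro rfl; simp [hp.ne_zero] at hsplit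
  have hπPb : π ∉ Pb := Ideal.notMem_of_span_singleton_eq_pow hP hP0 hPb hPPb hgen
  obtain ⟨U, V, h2π, hUV⟩ := exists_two_mul_eq_add_mul_sqrt_neg hdeg hd hs π
  have hN : Algebra.norm ℤ π = p ^ h := by
    have hpos : 0 ≤ Algebra.norm ℤ π := by nlinarith [sq_nonneg U, sq_nonneg V]
    rw [← Int.natAbs_of_nonneg hpos, ← Ideal.absNorm_span_singleton, hgen, map_pow,
      Ideal.absNorm_eq_of_span_natCast_eq_mul hdeg hp hP.ne_top hPb.ne_top hsplit]
    push_cast; rfl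
  rw [hN] at hUV
  have hπU : π - U ∈ Pb := by
    have hconj : ((U : 𝓞 K) - π) * π ∈ Pb := by
      rw [sub_mul_self_eq_of_two_mul_eq_add_mul (by simpa using hs) h2π hUV]
      exact_mod_cast Ideal.pow_mem_of_mem _ hpPb _ hodd.pos
    simpa using Pb.neg_mem ((hPb.mem_or_mem hconj).resolve_right hπPb)
  have hpU : ¬ (p : ℤ) ∣ U := fun ⟨c, hc⟩ =>
    hπPb (by simpa [hc] using Pb.add_mem hπU (Pb.mul_mem_right (c : 𝓞 K) hpPb))
  have hp4h : (p : ℤ) ∣ 4 * p ^ h := dvd_mul_of_dvd_right (dvd_pow_self _ hodd.pos.ne') _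
  have hpV : ¬ (p : ℤ) ∣ V := fun hV => hpU <| (Nat.prime_iff_prime_int.1 hp).dvd_of_dvd_pow
    (n := 2) (eq_sub_of_add_eq hUV ▸ dvd_sub hp4h (dvd_mul_of_dvd_right (dvd_pow hV two_ne_zero) _))
  have hdvd := dvd_pow_sub_pow_of_jacobiSym_eq_one hp hp4 (a := -d) (u := U)
    (by convert hp4h using 1; linear_combination hUV)
    (jacobiSym_eq_one_of_sq_add_mul_sq_eq_four_mul_pow hp hp4 hd4 hodd hUV hpV)
  simpa using Ideal.pow_sub_pow_mem_of_sub_intCast_mem hpPb hπU hdvd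

/-- Let `d > 0` be squarefree with `-d ≡ 1 (mod 4)` (i.e. `d ≡ 3 (mod 4)`), let
`K = ℚ(√-d)` have odd class number `h`, and let `p ≡ 1 (mod 4)` be a prime splitting
as `P·P̄` in `K`. If `π` generates `P^h`, then the quadratic residue symbol of `π`
modulo `P̄` equals the quartic residue symbol `((-d)/p)₄`, i.e.
`π^((p-1)/2) ≡ (-d)^((p-1)/4) (mod P̄)`. -/
theorem quadratic_symbol_eq_quartic_symbol
    (d : ℕ) (hdpos : 0 < d) (hd : Squarefree d) (hd4 : d % 4 = 3)
    (K : Type) [Field K] [NumberField K]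
    (hdeg : Module.finrank ℚ K = 2)
    (s : 𝓞 K) (hs : s ^ 2 = -(d : 𝓞 K))
    (hodd : Odd (classNumber K))
    (p : ℕ) (hp : p.Prime) (hp4 : p % 4 = 1)
    (hdisc : ¬ (p : ℤ) ∣ discr K)
    (P Pb : Ideal (𝓞 K)) (hP : P.IsPrime) (hPb : Pb.IsPrime) (hPPb : P ≠ Pb)
    (hsplit : Ideal.span {(p : 𝓞 K)} = P * Pb)
    (π : 𝓞 K) (hgen : Ideal.span {π} = P ^ classNumber K) :
    π ^ ((p - 1) / 2) - (-(d : 𝓞 K)) ^ ((p - 1) / 4) ∈ Pb :=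
  quadratic_symbol_eq_quartic_symbol_general d hd hd4 K hdeg s hs hodd p hp hp4 P Pb hP hPb hPPb
    hsplit π hgen
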